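/- Let K be a commutative ring with unity and A a finite alphabet. Two words u, v ∈ A* are twin with respect to L_K(A) if and only if λ(u) = λ(v), and they are anti-twin if and only if λ(u) = −λ(v). -/

import Mathlib

open scoped BigOperators
open Classical

attribute [local instance 100] LieRing.ofAssociativeRing

noncomputable section

/-- The free associative algebra `K⟨A⟩` on the alphabet `A`, realized as the monoid algebra
of the free monoid on `A`. -/
abbrev NC (K A : Type*) [CommRing K] : Type _ := MonoidAlgebra K (FreeMonoid A)

variable (K A : Type*) [CommRing K]

/-- The monomial (word) `w` viewed as an element of `K⟨A⟩`. -/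
def wp (w : List A) : NC K A := MonoidAlgebra.single (FreeMonoid.ofList w) 1

/-- The coefficient `(P, w)` of the word `w` in the polynomial `P`. -/
def coeffW (P : NC K A) (w : List A) : K := P.coeff (FreeMonoid.ofList w)

/-- The canonical scalar product `(P, Q) = ∑_w (P, w)(Q, w)` on `K⟨A⟩`. -/
def sp (P Q : NC K A) : K := Finsupp.sum P.coeff fun w c => c * Q.coeff w

/-- The free Lie algebra `L_K(A)`: the Lie subalgebra of `K⟨A⟩` (with the commutator
bracket) generated by the letters. -/
def freeLie : LieSubalgebra K (NC K A) :=
  LieSubalgebra.lieSpan K (NC K A) (Set.range fun a : A => wp K A [a])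

/-- The adjoint `λ` of the left-normed Lie bracketing, on words:
`λ(ε) = 0`, `λ(a) = a`, `λ(aub) = λ(au)b − λ(ub)a`. -/
def lam : List A → NC K A
  | [] => 0
  | [a] => wp K A [a]
  | a :: b :: t =>
      lam (a :: (b :: t).dropLast) * wp K A [(b :: t).getLast (by simp)] -
        lam (b :: t) * wp K A [a]
  termination_by w => w.length
  decreasing_by
    all_goals simp [List.length_dropLast]

/-- `λ` extended linearly to the whole of `K⟨A⟩`. -/
def lamLin : NC K A →ₗ[K] NC K A :=
  (Finsupp.linearCombination K fun w : FreeMonoid A => lam K A (FreeMonoid.toList w)) ∘ₗ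
    (MonoidAlgebra.coeffLinearEquiv K).toLinearMap

/-- The shuffle product of two words, as an element of `K⟨A⟩`. -/
def shuffleW : List A → List A → NC K A
  | [], v => wp K A v
  | u, [] => wp K A u
  | a :: u, b :: v =>
      wp K A [a] * shuffleW u (b :: v) + wp K A [b] * shuffleW (a :: u) v
  termination_by u v => u.length + v.length
  decreasing_by
    all_goals simp [Nat.lt_succ_iff]

/-- The shuffle product on `K⟨A⟩`, extended bilinearly. -/
def sh (P Q : NC K A) : NC K A :=
  Finsupp.sum P.coeff fun u cu =>
    Finsupp.sum Q.coeff fun v cv =>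
      (cu * cv) • shuffleW K A (FreeMonoid.toList u) (FreeMonoid.toList v)

/-- The right residual `P ▷ q` of `P` by a word `q`: `(P ▷ q, w) = (P, qw)`. -/
def rresW (P : NC K A) (q : List A) : NC K A :=
  Finsupp.sum P.coeff fun u c =>
    if q <+: FreeMonoid.toList u then c • wp K A ((FreeMonoid.toList u).drop q.length) else 0

/-- The right residual `P ▷ Q`: `(P ▷ Q, w) = (P, Qw)`. -/
def rres (P Q : NC K A) : NC K A :=
  Finsupp.sum Q.coeff fun v c => c • rresW K A P (FreeMonoid.toList v)

/-- Auxiliary left residual by a word `q`: `(q ◁ P, w) = (P, wq)`. -/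
def lresW (P : NC K A) (q : List A) : NC K A :=
  Finsupp.sum P.coeff fun u c =>
    if q <:+ FreeMonoid.toList u then
      c • wp K A ((FreeMonoid.toList u).take ((FreeMonoid.toList u).length - q.length))
    else 0

/-- The left residual `Q ◁ P`: `(Q ◁ P, w) = (P, wQ)`. -/
def lres (Q P : NC K A) : NC K A :=
  Finsupp.sum Q.coeff fun v c => c • lresW K A P (FreeMonoid.toList v)

/-- The number of trailing occurrences of the letter `a` in the word `v`. -/
def trailCount (a : A) (v : FreeMonoid A) : ℕ :=
  ((FreeMonoid.toList v).reverse.takeWhile fun x => decide (x = a)).length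

/-- `d(P)`: the least number of trailing `a`'s among the words in the support of `P`. -/
def dP (a : A) (P : NC K A) : ℕ :=
  sInf {n : ℕ | ∃ v ∈ Finsupp.support P.coeff, trailCount A a v = n}

/-- `e(P)`: the largest number of trailing `a`'s among the words in the support of `P`. -/
def eP (a : A) (P : NC K A) : ℕ :=
  Finset.sup (Finsupp.support P.coeff) (trailCount A a)

/-- The polynomial `P_i` in the decomposition `P = ∑ P_i b a^i`: it collects (and strips
the suffix `b a^i` from) the monomials of `P` with exactly `i` trailing `a`'s. -/
def partBA (a b : A) (i : ℕ) (P : NC K A) : NC K A :=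
  Finsupp.sum P.coeff fun v c =>
    if (FreeMonoid.toList v).reverse.take (i + 1) = List.replicate i a ++ [b] then
      c • wp K A ((FreeMonoid.toList v).take ((FreeMonoid.toList v).length - (i + 1)))
    else 0

/-- A word is Lyndon if it is nonempty and strictly smaller, in the lexicographic order,
than each of its proper nonempty right factors. -/
def IsLyndon {A : Type*} [LinearOrder A] (w : List A) : Prop :=
  w ≠ [] ∧ ∀ s t : List A, w = t ++ s → t ≠ [] → s ≠ [] → List.Lex (· < ·) w s

/-- `γ(w)`: the nonnegative generator of the ideal `{(P, w) : P ∈ L_ℤ(A)}` of `ℤ`. -/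
def gammaW (A : Type*) (w : List A) : ℤ :=
  haveI : (Ideal.span {c : ℤ | ∃ P ∈ freeLie ℤ A, coeffW ℤ A P w = c}).IsPrincipal :=
    IsPrincipalIdealRing.principal _
  (Submodule.IsPrincipal.generator
    (Ideal.span {c : ℤ | ∃ P ∈ freeLie ℤ A, coeffW ℤ A P w = c})).natAbs

end

/-! The operator `λ` is the adjoint of the left-normed bracketing `ℓ`: `(λ(u), x) = (ℓ(x), u)`
for all words `u`, `x`. Both sides obey the same recursion, because the coefficient of a word
`a m b` in `ℓ(y)d − dℓ(y)` only involves `ℓ(y)` at `a m` (when `d = b`) and at `m b`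
(when `d = a`), mirroring `λ(amb) = λ(am)b − λ(mb)a`. As a `K`-module, `L_K(A)` is spanned by
the `ℓ(x)`, since by the Jacobi identity the span of left-normed brackets of generators is
closed under the bracket. Hence `u` and `v` are twin (anti-twin) iff `(ℓ(x), u) = ±(ℓ(x), v)`
for every word `x`, i.e. iff `λ(u)` and `±λ(v)` have the same coefficients. -/

section LeftNormed

variable {R L ι : Type*} [CommRing R] [LieRing L] [LieAlgebra R L] (f : ι → L)

def leftNormed : List ι → L
  | [] => 0
  | i :: t => t.foldl (fun p j => ⁅p, f j⁆) (f i)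

@[simp]
lemma leftNormed_nil : leftNormed f [] = 0 := rfl

lemma leftNormed_cons_append_singleton (i : ι) (t : List ι) (j : ι) :
    leftNormed f ((i :: t) ++ [j]) = ⁅leftNormed f (i :: t), f j⁆ := by
  simp [leftNormed, List.foldl_append]

lemma leftNormed_mem_lieSpan (x : List ι) :
    leftNormed f x ∈ LieSubalgebra.lieSpan R L (Set.range f) := by
  induction x using List.reverseRecOn with
  | nil => exact LieSubalgebra.zero_mem _
  | append_singleton y j ih =>
    rcases y with _ | ⟨i, t⟩
    · exact LieSubalgebra.subset_lieSpan ⟨j, rfl⟩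
    · rw [leftNormed_cons_append_singleton]
      exact LieSubalgebra.lie_mem _ ih (LieSubalgebra.subset_lieSpan ⟨j, rfl⟩)

variable (R) in
lemma lie_mem_span_leftNormed {p : L} (hp : p ∈ Submodule.span R (Set.range (leftNormed f)))
    (j : ι) : ⁅p, f j⁆ ∈ Submodule.span R (Set.range (leftNormed f)) := by
  induction hp using Submodule.span_induction with
  | mem q hq =>
    obtain ⟨x, rfl⟩ := hq
    rcases x with _ | ⟨i, t⟩
    · simp
    · rw [← leftNormed_cons_append_singleton]
      exact Submodule.subset_span ⟨_, rfl⟩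
  | zero => simp
  | add q r _ _ hq hr => rw [add_lie]; exact add_mem hq hr
  | smul c q _ hq => rw [smul_lie]; exact Submodule.smul_mem _ c hq

lemma lie_leftNormed_mem_span_leftNormed {p : L}
    (hp : p ∈ Submodule.span R (Set.range (leftNormed f))) (x : List ι) :
    ⁅p, leftNormed f x⁆ ∈ Submodule.span R (Set.range (leftNormed f)) := by
  induction x using List.reverseRecOn generalizing p with
  | nil => simp
  | append_singleton y j ih =>
    rcases y with _ | ⟨i, t⟩
    · exact lie_mem_span_leftNormed R f hp j
    · rw [leftNormed_cons_append_singleton, leibniz_lie, ← lie_skew (leftNormed f (i :: t))]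
      exact add_mem (lie_mem_span_leftNormed R f (ih hp) j)
        (neg_mem (ih (lie_mem_span_leftNormed R f hp j)))

lemma lie_mem_span_leftNormed_of_mem {p q : L}
    (hp : p ∈ Submodule.span R (Set.range (leftNormed f)))
    (hq : q ∈ Submodule.span R (Set.range (leftNormed f))) :
    ⁅p, q⁆ ∈ Submodule.span R (Set.range (leftNormed f)) := by
  induction hq using Submodule.span_induction with
  | mem r hr =>
    obtain ⟨x, rfl⟩ := hr
    exact lie_leftNormed_mem_span_leftNormed f hp x
  | zero => simp
  | add q r _ _ hq hr => rw [lie_add]; exact add_mem hq hr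
  | smul c q _ hq => rw [lie_smul]; exact Submodule.smul_mem _ c hq

lemma lieSpan_range_eq_span_leftNormed :
    (LieSubalgebra.lieSpan R L (Set.range f) : Submodule R L) =
      Submodule.span R (Set.range (leftNormed f)) := by
  refine le_antisymm ?_ (Submodule.span_le.mpr ?_)
  · let S : LieSubalgebra R L :=
      { Submodule.span R (Set.range (leftNormed f)) with
        lie_mem' := lie_mem_span_leftNormed_of_mem f }
    change _ ≤ S.toSubmodule
    rw [LieSubalgebra.toSubmodule_le_toSubmodule, LieSubalgebra.lieSpan_le]
    rintro _ ⟨j, rfl⟩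
    exact Submodule.subset_span ⟨[j], rfl⟩
  · rintro _ ⟨x, rfl⟩
    exact leftNormed_mem_lieSpan f x

end LeftNormed

section Adjoint

variable {K A : Type*} [CommRing K]

@[simp]
lemma coeffW_zero (w : List A) : coeffW K A 0 w = 0 := rfl

lemma coeffW_sub (P Q : NC K A) (w : List A) :
    coeffW K A (P - Q) w = coeffW K A P w - coeffW K A Q w := rfl

lemma coeffW_wp (w x : List A) : coeffW K A (wp K A w) x = if w = x then 1 else 0 := by
  simp [coeffW, wp, Finsupp.single_apply]

lemma coeffW_mul_wp_singleton_append (P : NC K A) (b : A) (w : List A) (d : A) :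
    coeffW K A (P * wp K A [b]) (w ++ [d]) = if d = b then coeffW K A P w else 0 := by
  split_ifs with hdb
  · subst hdb
    rw [coeffW, wp, MonoidAlgebra.coeff_mul_single_eq_coeff_mul (FreeMonoid.ofList w), mul_one]
    · rfl
    · intro m _
      rw [FreeMonoid.ofList_append]
      exact mul_left_inj _
  · rw [coeffW, wp, MonoidAlgebra.coeff_mul_single_of_forall_mul_ne]
    intro m hm
    have hbd : b = d := by
      simpa using congrArg (fun x => (FreeMonoid.toList x).getLast?) hm
    exact hdb hbd.symm

lemma coeffW_mul_wp_singleton_nil (P : NC K A) (b : A) :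
    coeffW K A (P * wp K A [b]) [] = 0 := by
  rw [coeffW, wp, MonoidAlgebra.coeff_mul_single_of_forall_mul_ne]
  intro m hm
  simpa using congrArg FreeMonoid.toList hm

lemma coeffW_wp_singleton_mul_cons (P : NC K A) (b d : A) (w : List A) :
    coeffW K A (wp K A [b] * P) (d :: w) = if d = b then coeffW K A P w else 0 := by
  split_ifs with hdb
  · subst hdb
    rw [coeffW, wp, MonoidAlgebra.coeff_single_mul_eq_mul_coeff (FreeMonoid.ofList w), one_mul]
    · rfl
    · intro m _
      rw [FreeMonoid.ofList_cons, ← FreeMonoid.ofList_singleton]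
      exact mul_right_inj _
  · rw [coeffW, wp, MonoidAlgebra.coeff_single_mul_of_forall_mul_ne]
    intro m hm
    have hbd : b = d := by
      simpa using congrArg (fun x => (FreeMonoid.toList x).head?) hm
    exact hdb hbd.symm

lemma coeffW_wp_singleton_mul_nil (P : NC K A) (b : A) :
    coeffW K A (wp K A [b] * P) [] = 0 := by
  rw [coeffW, wp, MonoidAlgebra.coeff_single_mul_of_forall_mul_ne]
  intro m hm
  simpa using congrArg FreeMonoid.toList hm

variable (K A) in
noncomputable def ell : List A → NC K A := leftNormed fun a => wp K A [a]

@[simp]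
lemma ell_nil : ell K A [] = 0 := rfl

@[simp]
lemma ell_singleton (a : A) : ell K A [a] = wp K A [a] := rfl

lemma ell_cons_append_singleton (a : A) (t : List A) (d : A) :
    ell K A ((a :: t) ++ [d]) = ell K A (a :: t) * wp K A [d] - wp K A [d] * ell K A (a :: t) :=
  (leftNormed_cons_append_singleton _ a t d).trans (Ring.lie_def _ _)

lemma coeffW_ell_nil (x : List A) : coeffW K A (ell K A x) [] = 0 := by
  rcases x.eq_nil_or_concat' with rfl | ⟨y, d, rfl⟩
  · rfl
  rcases y with _ | ⟨a, t⟩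
  · simp [coeffW_wp]
  · rw [ell_cons_append_singleton, coeffW_sub, coeffW_mul_wp_singleton_nil,
      coeffW_wp_singleton_mul_nil, sub_zero]

lemma coeffW_ell_singleton (x : List A) (a : A) :
    coeffW K A (ell K A x) [a] = coeffW K A (wp K A [a]) x := by
  rcases x.eq_nil_or_concat' with rfl | ⟨y, d, rfl⟩
  · simp [coeffW_wp]
  rcases y with _ | ⟨e, s⟩
  · simp [coeffW_wp, eq_comm]
  · rw [ell_cons_append_singleton, coeffW_sub, ← List.nil_append [a],
      coeffW_mul_wp_singleton_append, List.nil_append, coeffW_wp_singleton_mul_cons, sub_self,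
      coeffW_wp, if_neg (by simp)]

lemma coeffW_ell_append_singleton (y : List A) (d a : A) (m : List A) (b : A) :
    coeffW K A (ell K A (y ++ [d])) ((a :: m) ++ [b]) =
      (if b = d then coeffW K A (ell K A y) (a :: m) else 0) -
        (if a = d then coeffW K A (ell K A y) (m ++ [b]) else 0) := by
  rcases y with _ | ⟨e, s⟩
  · simp [coeffW_wp]
  · rw [ell_cons_append_singleton, coeffW_sub, coeffW_mul_wp_singleton_append, List.cons_append,
      coeffW_wp_singleton_mul_cons]

lemma lam_cons_append_singleton (a : A) (m : List A) (b : A) :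
    lam K A ((a :: m) ++ [b]) =
      lam K A (a :: m) * wp K A [b] - lam K A (m ++ [b]) * wp K A [a] := by
  rcases m with _ | ⟨c, t⟩
  · show lam K A [a, b] = lam K A [a] * wp K A [b] - lam K A [b] * wp K A [a]
    conv_lhs => rw [lam]
    rfl
  · rw [List.cons_append, List.cons_append, lam]
    simp only [← List.cons_append, List.dropLast_concat, List.getLast_concat]

theorem coeffW_lam (u x : List A) : coeffW K A (lam K A u) x = coeffW K A (ell K A x) u := by
  induction hn : u.length using Nat.strong_induction_on generalizing u x with
  | _ n ih =>
    rcases u.eq_nil_or_concat' with rfl | ⟨r, b, rfl⟩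
    · rw [lam, coeffW_ell_nil]; rfl
    rcases r with _ | ⟨a, m⟩
    · rw [List.nil_append, lam, coeffW_ell_singleton]
    rw [lam_cons_append_singleton, coeffW_sub]
    rcases x.eq_nil_or_concat' with rfl | ⟨y, d, rfl⟩
    · rw [coeffW_mul_wp_singleton_nil, coeffW_mul_wp_singleton_nil, sub_zero, ell_nil]; rfl
    rw [coeffW_mul_wp_singleton_append, coeffW_mul_wp_singleton_append,
      coeffW_ell_append_singleton, @eq_comm _ b, @eq_comm _ a,
      ih _ (by simp [← hn]) (a :: m) y rfl, ih _ (by simp [← hn]) (m ++ [b]) y rfl]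

theorem forall_mem_freeLie_coeffW_eq_mul_iff (c : K) (u v : List A) :
    (∀ P ∈ freeLie K A, coeffW K A P u = c * coeffW K A P v) ↔ lam K A u = c • lam K A v := by
  let φ : NC K A →ₗ[K] K :=
    (Finsupp.lapply (FreeMonoid.ofList u) - c • Finsupp.lapply (FreeMonoid.ofList v)) ∘ₗ
      (MonoidAlgebra.coeffLinearEquiv K).toLinearMap
  have hφ (P : NC K A) : φ P = 0 ↔ coeffW K A P u = c * coeffW K A P v := sub_eq_zero
  calc (∀ P ∈ freeLie K A, coeffW K A P u = c * coeffW K A P v)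
      ↔ (freeLie K A : Submodule K (NC K A)) ≤ LinearMap.ker φ := by
        simp only [SetLike.le_def, LinearMap.mem_ker, hφ]; rfl
    _ ↔ ∀ x, coeffW K A (ell K A x) u = c * coeffW K A (ell K A x) v := by
        rw [freeLie, lieSpan_range_eq_span_leftNormed, Submodule.span_le, Set.range_subset_iff]
        simp only [SetLike.mem_coe, LinearMap.mem_ker, hφ]; rfl
    _ ↔ ∀ x, coeffW K A (lam K A u) x = c * coeffW K A (lam K A v) x := by
        simp only [coeffW_lam]
    _ ↔ lam K A u = c • lam K A v := by
        rw [MonoidAlgebra.ext_iff, Finsupp.ext_iff, ← FreeMonoid.ofList.forall_congr_right]; rfl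

end Adjoint

theorem twin_iff_lam_eq_antitwin_iff_lam_neg_general
    (K A : Type*) [CommRing K] (u v : List A) :
    ((∀ P ∈ freeLie K A, coeffW K A P u = coeffW K A P v) ↔ lam K A u = lam K A v) ∧
    ((∀ P ∈ freeLie K A, coeffW K A P u = - coeffW K A P v) ↔ lam K A u = - lam K A v) := by
  constructor
  · simpa using forall_mem_freeLie_coeffW_eq_mul_iff (1 : K) u v
  · simpa using forall_mem_freeLie_coeffW_eq_mul_iff (-1 : K) u v

theorem twin_iff_lam_eq_antitwin_iff_lam_neg
    (K A : Type*) [CommRing K] [Fintype A] (u v : List A) :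
    ((∀ P ∈ freeLie K A, coeffW K A P u = coeffW K A P v) ↔ lam K A u = lam K A v) ∧
    ((∀ P ∈ freeLie K A, coeffW K A P u = - coeffW K A P v) ↔ lam K A u = - lam K A v) :=
  twin_iff_lam_eq_antitwin_iff_lam_neg_general K A u v
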